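/- Let f : X ⟶ Y and g : V ⟶ W be morphisms of A, viewed as objects of Arrow(A). For every t ∈ ℕ, the group Sha^{t+1}(f, g) is isomorphic (as an abelian group) to the cokernel of the map ι^* : Ext^t_{Arrow(A)}(FG(f), g) → Ext^t_{Arrow(A)}(ker(ε_f), g) given by precomposition with the kernel inclusion ker(ε_f) ⟶ FG(f). -/

import Mathlib

/-!
The counit `ε_f` is an epimorphism: its domain component is the identity and its codomain
component `biprod.desc f 𝟙` is split by `biprod.inr`. Hence `ker ε_f ⟶ FG(f) ⟶ f` is short
exact, and its long exact sequence for `Ext(-, g)` contains the exact piece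
`Ext^t(FG f, g) → Ext^t(ker ε_f, g) → Ext^{t+1}(f, g) → Ext^{t+1}(FG f, g)`.
So the connecting map sends `Ext^t(ker ε_f, g)` onto `Sha^{t+1}(f, g)`, with kernel the image
of `ι^*`.
-/

open CategoryTheory Limits

universe w v u

variable (A : Type u) [Category.{v} A] [Abelian A]

/-- The functor `F : A × A ⥤ Arrow A` sending `(X, Y)` to the object
`biprod.inl : X ⟶ X ⊞ Y` of the arrow category. -/
@[simps]
noncomputable def ArrF : A × A ⥤ Arrow A where
  obj p := Arrow.mk (biprod.inl : p.1 ⟶ p.1 ⊞ p.2)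
  map {p q} φ := Arrow.homMk (u := φ.1) (v := biprod.map φ.1 φ.2) (by simp)

/-- The forgetful functor `G : Arrow A ⥤ A × A` sending an object `f : X ⟶ Y` of the
arrow category to the pair `(X, Y)`. -/
@[simps]
def ArrG : Arrow A ⥤ A × A where
  obj f := (f.left, f.right)
  map φ := (φ.left, φ.right)

variable {A}

/-- The counit morphism `ε_f : FG(f) ⟶ f`, whose domain component is `𝟙 X` and whose
codomain component is `biprod.desc f 𝟙 : X ⊞ Y ⟶ Y`. -/
noncomputable def arrCounit (f : Arrow A) : (ArrF A).obj ((ArrG A).obj f) ⟶ f :=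
  Arrow.homMk (u := 𝟙 f.left) (v := biprod.desc f.hom (𝟙 f.right)) (by simp [ArrF, ArrG])

/-- The map `ε_f^* : Ext^n_{Arrow A}(f, g) → Ext^n_{Arrow A}(FG(f), g)` given by
precomposition with the counit `ε_f`, as a homomorphism of abelian groups.
`Sha^n(f, g)` is its kernel. -/
noncomputable def shaHom [Abelian (Arrow A)] [HasExt.{w} (Arrow A)]
    (f g : Arrow A) (n : ℕ) :
    Abelian.Ext f g n →+ Abelian.Ext ((ArrF A).obj ((ArrG A).obj f)) g n :=
  AddMonoidHom.mk' (fun e => (Abelian.Ext.mk₀ (arrCounit f)).comp e (zero_add n))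
    (fun a b => Abelian.Ext.comp_add _ a b _)

/-- The map `ι^* : Ext^t_{Arrow A}(FG(f), g) → Ext^t_{Arrow A}(ker(ε_f), g)` given by
precomposition with the kernel inclusion `ker(ε_f) ⟶ FG(f)`, as a homomorphism of
abelian groups. -/
noncomputable def precompKerHom [Abelian (Arrow A)] [HasExt.{w} (Arrow A)]
    (f g : Arrow A) (t : ℕ) :
    Abelian.Ext ((ArrF A).obj ((ArrG A).obj f)) g t →+
      Abelian.Ext (kernel (arrCounit f) : Arrow A) g t :=
  AddMonoidHom.mk' (fun e => (Abelian.Ext.mk₀ (kernel.ι (arrCounit f))).comp e (zero_add t))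
    (fun a b => Abelian.Ext.comp_add _ a b _)

namespace CategoryTheory

lemma Arrow.epi_of_epi_left_of_epi_right {C : Type*} [Category C] {f g : Arrow C} (φ : f ⟶ g)
    [Epi φ.left] [Epi φ.right] : Epi φ where
  left_cancellation ψ χ h := by
    ext
    · exact (cancel_epi φ.left).1 (congrArg CommaMorphism.left h)
    · exact (cancel_epi φ.right).1 (congrArg CommaMorphism.right h)

lemma Limits.KernelFork.exists_isLimit_ofι_of_hasZeroMorphisms {C : Type*} [Category C]
    (Z Z' : HasZeroMorphisms C) {K P Q : C} {i : K ⟶ P} {e : P ⟶ Q} {w}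
    (h : IsLimit (@KernelFork.ofι C _ Z P Q e K i w)) :
    ∃ w', Nonempty (IsLimit (@KernelFork.ofι C _ Z' P Q e K i w')) := by
  obtain rfl := Subsingleton.elim Z Z'
  exact ⟨w, ⟨h⟩⟩

lemma ShortComplex.shortExact_of_isLimit_kernelFork {C : Type*} [Category C] [Abelian C]
    {K P Q : C} {i : K ⟶ P} {e : P ⟶ Q} [Epi e] {w : i ≫ e = 0}
    (hi : IsLimit (KernelFork.ofι i w)) : (ShortComplex.mk i e w).ShortExact where
  exact := exact_of_f_is_kernel _ hi
  mono_f := Fork.IsLimit.mono hi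
  epi_g := ‹_›

namespace ShortComplex.ShortExact

open Abelian

variable {C : Type*} [Category C] [Abelian C] [HasExt.{w} C] {S : ShortComplex C}
  (hS : S.ShortExact) (Y : C) (n : ℕ)

noncomputable def extClassPrecompToKer :
    Ext S.X₁ Y n →+ ((Ext.mk₀ S.g).precomp Y (zero_add (n + 1))).ker :=
  (hS.extClass.precomp Y (add_comm 1 n)).codRestrict _
    fun x => hS.comp_extClass_assoc x (add_comm 1 n)

@[simp]
lemma coe_extClassPrecompToKer_apply (x : Ext S.X₁ Y n) :
    (hS.extClassPrecompToKer Y n x : Ext S.X₃ Y (n + 1)) = hS.extClass.comp x (add_comm 1 n) :=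
  rfl

lemma extClassPrecompToKer_surjective : Function.Surjective (hS.extClassPrecompToKer Y n) := by
  rintro ⟨y, hy⟩
  obtain ⟨x, hx⟩ := Ext.contravariant_sequence_exact₃ hS Y y hy (add_comm 1 n)
  exact ⟨x, Subtype.ext hx⟩

lemma ker_extClassPrecompToKer :
    (hS.extClassPrecompToKer Y n).ker = ((Ext.mk₀ S.f).precomp Y (zero_add n)).range := by
  ext x
  rw [AddMonoidHom.mem_ker, ← Subtype.coe_inj, coe_extClassPrecompToKer_apply,
    ZeroMemClass.coe_zero]
  refine ⟨Ext.contravariant_sequence_exact₁ hS Y x (add_comm 1 n), ?_⟩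
  rintro ⟨y, rfl⟩
  exact hS.extClass_comp_assoc y

noncomputable def kerPrecompMk₀GAddEquiv :
    ((Ext.mk₀ S.g).precomp Y (zero_add (n + 1))).ker ≃+
      Ext S.X₁ Y n ⧸ ((Ext.mk₀ S.f).precomp Y (zero_add n)).range :=
  ((QuotientAddGroup.quotientAddEquivOfEq (hS.ker_extClassPrecompToKer Y n)).symm.trans
    (QuotientAddGroup.quotientKerEquivOfSurjective _
      (hS.extClassPrecompToKer_surjective Y n))).symm

end ShortComplex.ShortExact

end CategoryTheory

instance epi_arrCounit (f : Arrow A) : Epi (arrCounit f) := by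
  have : IsSplitEpi (arrCounit f).right := ⟨⟨biprod.inr, biprod.inr_desc _ _⟩⟩
  have : Epi (arrCounit f).left := inferInstanceAs (Epi (𝟙 _))
  exact Arrow.epi_of_epi_left_of_epi_right _

theorem statement17_general [Abelian (Arrow A)] [HasExt.{w} (Arrow A)]
    {X Y V W : A} (f : X ⟶ Y) (g : V ⟶ W) (t : ℕ) :
    Nonempty ((shaHom (Arrow.mk f) (Arrow.mk g) (t + 1)).ker ≃+
      (Abelian.Ext (kernel (arrCounit (Arrow.mk f)) : Arrow A) (Arrow.mk g) t ⧸
        (precompKerHom (Arrow.mk f) (Arrow.mk g) t).range)) := by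
  -- `kernel` is taken for the preadditive structure on `Arrow A` induced from `A`, while `Ext`
  -- uses the one of the `Abelian (Arrow A)` instance; both have the same zero morphisms.
  obtain ⟨hw, ⟨hK⟩⟩ := KernelFork.exists_isLimit_ofι_of_hasZeroMorphisms _
    (Abelian.toPreadditive (C := Arrow A)).preadditiveHasZeroMorphisms
    (w := kernel.condition _) (kernelIsKernel (arrCounit (Arrow.mk f)))
  let _ : Preadditive (Arrow A) := Abelian.toPreadditive
  exact ⟨(ShortComplex.shortExact_of_isLimit_kernelFork hK).kerPrecompMk₀GAddEquiv _ t⟩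

/-- for morphisms `f : X ⟶ Y` and `g : V ⟶ W` of `A`, viewed as objects
of `Arrow A`, and every `t : ℕ`, the group `Sha^{t+1}(f, g)` is isomorphic, as an
abelian group, to the cokernel of the map
`ι^* : Ext^t_{Arrow A}(FG(f), g) → Ext^t_{Arrow A}(ker(ε_f), g)` given by
precomposition with the kernel inclusion `ker(ε_f) ⟶ FG(f)`. -/
theorem statement17 [EnoughProjectives A] [Abelian (Arrow A)] [HasExt.{w} (Arrow A)]
    {X Y V W : A} (f : X ⟶ Y) (g : V ⟶ W) (t : ℕ) :
    Nonempty ((shaHom (Arrow.mk f) (Arrow.mk g) (t + 1)).ker ≃+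
      (Abelian.Ext (kernel (arrCounit (Arrow.mk f)) : Arrow A) (Arrow.mk g) t ⧸
        (precompKerHom (Arrow.mk f) (Arrow.mk g) t).range)) :=
  statement17_general f g t
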